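/- Let b₁,…,bₙ be a basis of ℝⁿ with dual basis b₁*,…,bₙ* (⟨b_i*, b_j⟩ = δ_{ij} for the standard inner product ⟨·,·⟩). Let 1 ≤ n' ≤ n, let α₁,…,α_{n'} be positive rational numbers, set b_{n+1} := α₁b₁ + ⋯ + α_{n'}b_{n'}, and fix i₀ ∈ {1,…,n'}. Let N₁ be the additive subgroup of ℝⁿ generated by {b_i : 1 ≤ i ≤ n+1, i ≠ i₀}. Then the dual lattice {x ∈ ℝⁿ : ⟨x, w⟩ ∈ ℤ for all w ∈ N₁} equals the additive subgroup of ℝⁿ generated by the vectors b_i* − (α_i/α_{i₀})·b_{i₀}* for i ∈ {1,…,n'}∖{i₀}, together with (1/α_{i₀})·b_{i₀}*, together with b_i* for n' < i ≤ n. -/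

import Mathlib

open scoped RealInnerProductSpace BigOperators

noncomputable section

/-- Euclidean space `ℝⁿ` with the standard inner product. -/
abbrev E (n : ℕ) : Type := EuclideanSpace ℝ (Fin n)

/-!
`N₁` is the `ℤ`-span of the real basis obtained from `b` by exchanging `b_{i₀}` for
`b_{n+1} = ∑ αᵢ bᵢ`, which is legitimate because `α_{i₀} ≠ 0`. The dual lattice of the
`ℤ`-span of a basis is the `ℤ`-span of its dual basis, and the dual basis of the exchanged
basis is computed directly from `b*`: it is the family listed in the theorem.
-/

open Function Set

section

variable {F : Type*} [NormedAddCommGroup F] [InnerProductSpace ℝ F]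

lemma nondegenerate_innerₗ : (innerₗ F).Nondegenerate :=
  ⟨fun x hx => inner_self_eq_zero.mp (hx x), fun y hy => inner_self_eq_zero.mp (hy y)⟩

def dualLattice (N : AddSubgroup F) : Set F :=
  {x | ∀ w ∈ N, ∃ k : ℤ, ⟪x, w⟫ = k}

lemma dualLattice_toAddSubgroup (N : Submodule ℤ F) :
    dualLattice N.toAddSubgroup = LinearMap.BilinForm.dualSubmodule (innerₗ F) N := by
  ext x
  simp [dualLattice, LinearMap.BilinForm.mem_dualSubmodule, Submodule.mem_one, eq_comm]

variable {ι : Type*} [Fintype ι] [DecidableEq ι]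

lemma linearIndependent_of_inner_eq_ite {v v' : ι → F}
    (hdual : ∀ i j, ⟪v' i, v j⟫ = if i = j then 1 else 0) : LinearIndependent ℝ v := by
  refine Fintype.linearIndependent_iff.mpr fun g hg i => ?_
  simpa [inner_sum, real_inner_smul_right, hdual] using congrArg (⟪v' i, ·⟫) hg

theorem dualLattice_closure_range_eq_closure_range {v v' : ι → F}
    (hspan : ⊤ ≤ Submodule.span ℝ (range v))
    (hdual : ∀ i j, ⟪v' i, v j⟫ = if i = j then 1 else 0) :
    dualLattice (AddSubgroup.closure (range v)) = AddSubgroup.closure (range v') := by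
  set B := Module.Basis.mk (linearIndependent_of_inner_eq_ite hdual) hspan
  have hB : LinearMap.BilinForm.dualBasis (innerₗ F) nondegenerate_innerₗ B = v' :=
    (LinearMap.BilinForm.dualBasis_eq_iff _ _ _).mpr fun i j => by simp [B, hdual, eq_comm]
  have h := LinearMap.BilinForm.dualSubmodule_span_of_basis (innerₗ F) (R := ℤ)
    nondegenerate_innerₗ B
  rw [hB, Module.Basis.coe_mk] at h
  rw [← Submodule.span_int_eq_addSubgroupClosure, ← Submodule.span_int_eq_addSubgroupClosure,
    dualLattice_toAddSubgroup, h, Submodule.coe_toAddSubgroup]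

end

lemma Set.range_update_eq_image_union {ι β : Type*} [DecidableEq ι] (f : ι → β) (i₀ : ι) (y : β) :
    range (update f i₀ y) = f '' {i | i ≠ i₀} ∪ {y} := by
  ext x
  simp only [mem_range, mem_union, mem_image, mem_ofPred_eq, mem_singleton_iff]
  constructor
  · rintro ⟨i, rfl⟩
    rcases eq_or_ne i i₀ with rfl | hi
    · simp
    · exact Or.inl ⟨i, hi, (update_of_ne hi _ _).symm⟩
  · rintro (⟨i, hi, rfl⟩ | rfl)
    · exact ⟨i, update_of_ne hi _ _⟩
    · exact ⟨i₀, update_self _ _ _⟩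

lemma Set.range_update_ite {ι β : Type*} [DecidableEq ι] {s : Finset ι} {i₀ : ι} (hi₀ : i₀ ∈ s)
    (f g : ι → β) (y : β) :
    range (update (fun i => if i ∈ s then f i else g i) i₀ y) =
      f '' {i | i ∈ s ∧ i ≠ i₀} ∪ {y} ∪ g '' {i | i ∉ s} := by
  rw [range_update_eq_image_union, union_right_comm]
  congr 1
  ext x
  simp only [mem_union, mem_image, mem_ofPred_eq]
  constructor
  · rintro ⟨i, hi, rfl⟩
    by_cases hs : i ∈ s
    · exact Or.inl ⟨i, ⟨hs, hi⟩, (if_pos hs).symm⟩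
    · exact Or.inr ⟨i, hs, (if_neg hs).symm⟩
  · rintro (⟨i, ⟨hs, hi⟩, rfl⟩ | ⟨i, hs, rfl⟩)
    · exact ⟨i, hi, if_pos hs⟩
    · exact ⟨i, ne_of_mem_of_not_mem hi₀ hs |>.symm, if_neg hs⟩

lemma Submodule.top_le_span_range_update_sum {K V ι : Type*} [Field K] [AddCommGroup V]
    [Module K V] [DecidableEq ι] {b : ι → V} (hspan : ⊤ ≤ span K (range b)) {s : Finset ι}
    {a : ι → K} {i₀ : ι} (hi₀ : i₀ ∈ s) (ha : a i₀ ≠ 0) :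
    ⊤ ≤ span K (range (update b i₀ (∑ j ∈ s, a j • b j))) := by
  set W := span K (range (update b i₀ (∑ j ∈ s, a j • b j)))
  have hmem : ∀ j ≠ i₀, b j ∈ W := fun j hj => subset_span ⟨j, update_of_ne hj _ _⟩
  have hb₀ : b i₀ = (a i₀)⁻¹ • (∑ j ∈ s, a j • b j - ∑ j ∈ s.erase i₀, a j • b j) := by
    rw [← Finset.add_sum_erase s _ hi₀, add_sub_cancel_right, inv_smul_smul₀ ha]
  refine hspan.trans (span_le.mpr ?_)
  rintro _ ⟨i, rfl⟩
  by_cases hi : i = i₀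
  · rw [hi, hb₀]
    exact smul_mem _ _ (sub_mem (subset_span ⟨i₀, update_self _ _ _⟩)
      (sum_mem fun j hj => smul_mem _ _ (hmem j (Finset.ne_of_mem_erase hj))))
  · exact hmem i hi

section

variable {ι F : Type*} [DecidableEq ι] [NormedAddCommGroup F] [InnerProductSpace ℝ F]
  {b bs : ι → F}

lemma inner_sum_smul_eq_ite (hdual : ∀ i j, ⟪bs i, b j⟫ = if i = j then 1 else 0)
    (s : Finset ι) (a : ι → ℝ) (i : ι) :
    ⟪bs i, ∑ j ∈ s, a j • b j⟫ = if i ∈ s then a i else 0 := by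
  simp [inner_sum, real_inner_smul_right, hdual]

def exchangeDual (bs : ι → F) (s : Finset ι) (a : ι → ℝ) (i₀ : ι) : ι → F :=
  update (fun i => if i ∈ s then bs i - (a i / a i₀) • bs i₀ else bs i) i₀ ((a i₀)⁻¹ • bs i₀)

lemma inner_exchangeDual_update_sum (hdual : ∀ i j, ⟪bs i, b j⟫ = if i = j then 1 else 0)
    {s : Finset ι} {a : ι → ℝ} {i₀ : ι} (hi₀ : i₀ ∈ s) (ha : a i₀ ≠ 0) (i j : ι) :
    ⟪exchangeDual bs s a i₀ i, update b i₀ (∑ j ∈ s, a j • b j) j⟫ = if i = j then 1 else 0 := by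
  have hsum := inner_sum_smul_eq_ite hdual s a
  unfold exchangeDual
  by_cases hi : i = i₀ <;> by_cases hj : j = i₀
  · simp [hi, hj, real_inner_smul_left, hsum, hi₀, ha]
  · simp [hi, hj, real_inner_smul_left, hdual, Ne.symm hj]
  · by_cases hs : i ∈ s
    · simp [hi, hj, hs, inner_sub_left, real_inner_smul_left, hsum, hi₀, ha]
    · simp [hi, hj, hs, hsum]
  · by_cases hs : i ∈ s <;>
      simp [hi, hj, hs, inner_sub_left, real_inner_smul_left, hdual, Ne.symm hj]

end

theorem stmt6 (n n' : ℕ)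
    (b bs : Fin n → E n)
    (hspan : Submodule.span ℝ (Set.range b) = ⊤)
    (hdual : ∀ i j : Fin n, ⟪bs i, b j⟫ = if i = j then 1 else 0)
    (α : Fin n → ℚ) (hα : ∀ i : Fin n, i.val < n' → 0 < α i)
    (i₀ : Fin n) (hi₀ : i₀.val < n')
    (blast : E n)
    (hblast : blast =
      ∑ i ∈ Finset.univ.filter (fun i : Fin n => i.val < n'), (α i : ℝ) • b i)
    (N₁ : AddSubgroup (E n))
    (hN₁ : N₁ = AddSubgroup.closure ((b '' {i | i ≠ i₀}) ∪ {blast})) :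
    {x : E n | ∀ w ∈ N₁, ∃ k : ℤ, ⟪x, w⟫ = (k : ℝ)} =
      ↑(AddSubgroup.closure
        (((fun i => bs i - ((α i / α i₀ : ℚ) : ℝ) • bs i₀) ''
            {i : Fin n | i.val < n' ∧ i ≠ i₀})
          ∪ {((α i₀ : ℚ) : ℝ)⁻¹ • bs i₀}
          ∪ (bs '' {i : Fin n | n' ≤ i.val}))) := by
  set s := Finset.univ.filter fun i : Fin n => i.val < n'
  have hi₀s : i₀ ∈ s := by simpa [s] using hi₀
  have hα₀ : ((α i₀ : ℚ) : ℝ) ≠ 0 := by exact_mod_cast (hα i₀ hi₀).ne'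
  subst hblast hN₁
  change dualLattice _ = _
  rw [← range_update_eq_image_union, dualLattice_closure_range_eq_closure_range
    (Submodule.top_le_span_range_update_sum hspan.ge hi₀s hα₀)
    (inner_exchangeDual_update_sum hdual hi₀s hα₀), exchangeDual, range_update_ite hi₀s]
  simp [s]
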